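/- arXiv:1012.5708 — 5 statements merged into one kernel-verified Lean document; each statement's English description precedes it below -/
import Mathlib

section
/- For the inversion map, the second-derivative identity v^n δ_α^n (∂v^μ/∂v̂^β) + v^n δ_β^n (∂v^μ/∂v̂^α) = ∂²v^μ/∂v̂^α ∂v̂^β + η_{αβ} v^n δ_1^μ holds for all 1 ≤ α, β, μ ≤ n. -/
noncomputable section

/-- The anti-diagonal metric `η_{αβ} = δ_{α+β,n+1}` (0-based: `α+β = n-1`). -/
def eta (n : ℕ) (α β : Fin n) : ℝ := if (α : ℕ) + (β : ℕ) = n - 1 then 1 else 0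

/-- The last index (1-based index `n`). -/
def lastI (n : ℕ) (hn : 0 < n) : Fin n := ⟨n - 1, by omega⟩

/-- The first index (1-based index `1`). -/
def firstI (n : ℕ) (hn : 0 < n) : Fin n := ⟨0, hn⟩

/-- The inversion map: `v̂¹ = ½ (η_{αβ} v^α v^β)/vⁿ`, `v̂^i = v^i/vⁿ` for `2 ≤ i ≤ n-1`,
`v̂ⁿ = -1/vⁿ`. -/
def invMap (n : ℕ) (hn : 0 < n) (v : Fin n → ℝ) : Fin n → ℝ := fun α =>
  if (α : ℕ) = 0 then
    (1 / 2) * (∑ β, ∑ γ, eta n β γ * v β * v γ) / v (lastI n hn)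
  else if (α : ℕ) = n - 1 then
    -1 / v (lastI n hn)
  else
    v α / v (lastI n hn)


/-- Partial derivative `∂f/∂v^i`. -/
def pd {n : ℕ} (f : (Fin n → ℝ) → ℝ) (i : Fin n) (x : Fin n → ℝ) : ℝ :=
  fderiv ℝ f x (Pi.single i 1)

/-!
Each component of the inverse map is `v^μ = f^μ / v̂ⁿ` with `f¹ = ½ η(v̂, v̂)`, `fⁿ = -1` and
`f^i = v̂^i`, so the Hessian of `f^μ` is `η_{αβ} δ^μ_1`. Differentiating `f^μ = v̂ⁿ v^μ` twice,
with `v̂ⁿ` linear, gives `∂_α∂_β f^μ = v̂ⁿ ∂_α∂_β v^μ + δ_α^n ∂_β v^μ + δ_β^n ∂_α v^μ`, and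
dividing by `v̂ⁿ = -1 / vⁿ` is the identity.
-/

open Filter Topology

section

variable {E : Type*} [NormedAddCommGroup E] [NormedSpace ℝ E]

theorem fderiv_fderiv_clm_mul {g : E → ℝ} {x : E} (ℓ : E →L[ℝ] ℝ) (hg : ContDiffAt ℝ 2 g x)
    (u v : E) :
    fderiv ℝ (fun y => fderiv ℝ (fun z => ℓ z * g z) y v) x u =
      ℓ x * fderiv ℝ (fun y => fderiv ℝ g y v) x u + ℓ u * fderiv ℝ g x v +
        ℓ v * fderiv ℝ g x u := by
  have hfirst : (fun y => fderiv ℝ (fun z => ℓ z * g z) y v) =ᶠ[𝓝 x]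
      fun y => ℓ y * fderiv ℝ g y v + ℓ v * g y := by
    filter_upwards [hg.eventually (by simp)] with y hy
    rw [fderiv_fun_mul ℓ.differentiableAt (hy.differentiableAt two_ne_zero)]
    simp [ContinuousLinearMap.fderiv, add_comm, mul_comm]
  have hDv : DifferentiableAt ℝ (fun y => fderiv ℝ g y v) x :=
    ((hg.fderiv_right (m := 1) le_rfl).clm_apply contDiffAt_const).differentiableAt one_ne_zero
  rw [hfirst.fderiv_eq, ((ℓ.hasFDerivAt.fun_mul hDv.hasFDerivAt).fun_add
    ((hg.differentiableAt two_ne_zero).hasFDerivAt.const_mul (ℓ v))).fderiv]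
  simp only [add_apply, smul_apply, smul_eq_mul]
  ring

theorem fderiv_fderiv_div_clm {f : E → ℝ} {x : E} (ℓ : E →L[ℝ] ℝ) (hf : ContDiffAt ℝ 2 f x)
    (hx : ℓ x ≠ 0) (u v : E) :
    (-1 / ℓ x) * ℓ u * fderiv ℝ (fun y => f y / ℓ y) x v +
        (-1 / ℓ x) * ℓ v * fderiv ℝ (fun y => f y / ℓ y) x u =
      fderiv ℝ (fun y => fderiv ℝ (fun z => f z / ℓ z) y v) x u +
        (-1 / ℓ x) * fderiv ℝ (fun y => fderiv ℝ f y v) x u := by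
  have hf_eq : f =ᶠ[𝓝 x] fun y => ℓ y * (f y / ℓ y) := by
    filter_upwards [ℓ.continuous.continuousAt.eventually_ne hx] with y hy
    field_simp
  have hDf : (fun y => fderiv ℝ f y v) =ᶠ[𝓝 x]
      fun y => fderiv ℝ (fun z => ℓ z * (f z / ℓ z)) y v := by
    filter_upwards [hf_eq.fderiv (𝕜 := ℝ)] with y hy
    rw [hy]
  rw [hDf.fderiv_eq,
    fderiv_fderiv_clm_mul (g := fun y => f y / ℓ y) ℓ (hf.div ℓ.contDiff.contDiffAt hx) u v]
  field_simp
  ring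

theorem fderiv_fderiv_bilinear_diag (B : E →L[ℝ] E →L[ℝ] ℝ) (x u v : E) :
    fderiv ℝ (fun y => fderiv ℝ (fun z => B z z) y v) x u = B u v + B v u := by
  have hfirst : (fun y => fderiv ℝ (fun z => B z z) y v) = fun y => B.flip v y + B v y := by
    ext y
    rw [show (fun z => B z z) = fun z => B (id z) (id z) from rfl,
      (B.hasFDerivAt_of_bilinear (hasFDerivAt_id y) (hasFDerivAt_id y)).fderiv]
    simp [add_comm]
  rw [hfirst, ((B.flip v).hasFDerivAt.fun_add (B v).hasFDerivAt).fderiv]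
  simp

end

section

variable {n : ℕ}

def etaForm (n : ℕ) : (Fin n → ℝ) →L[ℝ] (Fin n → ℝ) →L[ℝ] ℝ :=
  ∑ i, ∑ j, eta n i j • (ContinuousLinearMap.mul ℝ ℝ).bilinearComp (.proj i) (.proj j)

theorem etaForm_apply (y z : Fin n → ℝ) : etaForm n y z = ∑ i, ∑ j, eta n i j * y i * z j := by
  simp [etaForm, mul_assoc]

theorem eta_comm (α β : Fin n) : eta n α β = eta n β α := by
  simp [eta, add_comm]

theorem etaForm_single (α β : Fin n) :
    etaForm n (Pi.single α 1) (Pi.single β 1) = eta n α β := by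
  simp [etaForm_apply, Pi.single_apply]

def invMapNum (n : ℕ) (μ : Fin n) : (Fin n → ℝ) → ℝ :=
  if (μ : ℕ) = 0 then fun y => ((2⁻¹ : ℝ) • etaForm n) y y
  else if (μ : ℕ) = n - 1 then fun _ => -1
  else fun y => y μ

theorem invMap_eq_div (hn : 0 < n) (y : Fin n → ℝ) (μ : Fin n) :
    invMap n hn y μ = invMapNum n μ y / y (lastI n hn) := by
  unfold invMap invMapNum
  split_ifs <;> simp [etaForm_apply, div_eq_mul_inv]

theorem invMapNum_lastI (hn₀ : 0 < n) (hn : 2 ≤ n) :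
    invMapNum n (lastI n hn₀) = fun _ => -1 := by
  have hlast : n - 1 ≠ 0 := by omega
  simp [invMapNum, lastI, hlast]

theorem contDiff_invMapNum (μ : Fin n) : ContDiff ℝ 2 (invMapNum n μ) := by
  unfold invMapNum
  split_ifs
  · exact ((2⁻¹ : ℝ) • etaForm n).isBoundedBilinearMap.contDiff.comp
      (contDiff_id.prodMk contDiff_id)
  · exact contDiff_const
  · exact contDiff_apply ℝ ℝ μ

theorem pd_pd_invMapNum (hn : 0 < n) (x : Fin n → ℝ) (α β μ : Fin n) :
    pd (fun y => pd (invMapNum n μ) β y) α x =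
      eta n α β * if μ = firstI n hn then 1 else 0 := by
  have hfirst : μ = firstI n hn ↔ (μ : ℕ) = 0 := by simp [firstI, Fin.ext_iff]
  simp only [hfirst, invMapNum, pd]
  split_ifs with h0 hl
  · rw [fderiv_fderiv_bilinear_diag]
    simp only [smul_apply, etaForm_single, smul_eq_mul, eta_comm β α]
    ring
  · simp
  · simp [fun y => (hasFDerivAt_apply (𝕜 := ℝ) (F' := fun _ : Fin n => ℝ) μ y).fderiv]

end

/-- the second-derivative identity
`vⁿ δ_α^n ∂v^μ/∂v̂^β + vⁿ δ_β^n ∂v^μ/∂v̂^α = ∂²v^μ/∂v̂^α∂v̂^β + η_{αβ} vⁿ δ_1^μ`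
for the inverse `v = v(v̂)` of the inversion map (which is given by the same formula `invMap`),
all derivatives taken with respect to the hatted coordinates. -/
theorem inversion_second_derivative_identity (n : ℕ) (hn : 2 ≤ n) (vh : Fin n → ℝ)
    (hv : vh (lastI n (by omega)) ≠ 0) (α β μ : Fin n) :
    invMap n (by omega) vh (lastI n (by omega)) *
        (if α = lastI n (by omega) then 1 else 0) *
        pd (fun x => invMap n (by omega) x μ) β vh +
      invMap n (by omega) vh (lastI n (by omega)) *
        (if β = lastI n (by omega) then 1 else 0) *
        pd (fun x => invMap n (by omega) x μ) α vh
    = pd (fun x => pd (fun y => invMap n (by omega) y μ) β x) α vh +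
      eta n α β * invMap n (by omega) vh (lastI n (by omega)) *
        (if μ = firstI n (by omega) then 1 else 0) := by
  have hn₀ : 0 < n := by omega
  set ℓ := ContinuousLinearMap.proj (R := ℝ) (φ := fun _ : Fin n => ℝ) (lastI n hn₀)
  have hquot : (fun y => invMap n hn₀ y μ) = fun y => invMapNum n μ y / ℓ y :=
    funext fun y => invMap_eq_div hn₀ y μ
  have hlast : invMap n hn₀ vh (lastI n hn₀) = -1 / ℓ vh := by
    rw [invMap_eq_div, invMapNum_lastI hn₀ hn]; rfl
  have hδ (γ : Fin n) : (if γ = lastI n hn₀ then 1 else 0) = ℓ (Pi.single γ 1) := by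
    simp [ℓ, Pi.single_apply, eq_comm]
  have key := fderiv_fderiv_div_clm ℓ (contDiff_invMapNum μ).contDiffAt hv
    (Pi.single α 1) (Pi.single β 1)
  have hhess := pd_pd_invMapNum hn₀ vh α β μ
  unfold pd at hhess ⊢
  rw [hquot, hlast, hδ, hδ, key, hhess]
  ring
end
end

section
/- The functions Ω_{α,p;β,q} defined by the generating relation Σ_{p,q≥0} Ω_{α,p;β,q} z^p w^q = (∂_μθ_α(z) η^{μν} ∂_νθ_β(w) − η_{αβ})/(z+w) are symmetric: Ω_{α,p;β,q} = Ω_{β,q;α,p} for all α, β, p, q. -/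
noncomputable section

/-- the coefficients `Ω_{α,p;β,q}` of the generating relation
`Σ Ω z^p w^q = (∂θ_α(z) η⁻¹ ∂θ_β(w) − η_{αβ})/(z+w)` are symmetric: `Ω_{α,p;β,q} = Ω_{β,q;α,p}`.
The generating relation is expressed coefficientwise (multiplying through by `z + w`), and the
normalization `∂θ_α(z) η⁻¹ ∂θ_β(−z) = η_{αβ}` is also expressed coefficientwise. -/
theorem Omega_symmetric (n : ℕ)
    (η ηinv : Fin n → Fin n → ℝ)
    (hηsym : ∀ α β, η α β = η β α)
    (hηinv : ∀ α β, (∑ ν, ηinv α ν * η ν β) = if α = β then (1 : ℝ) else 0)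
    (θ : Fin n → ℕ → (Fin n → ℝ) → ℝ)
    (hθ : ∀ α p, ContDiff ℝ (⊤ : ℕ∞) (θ α p))
    (hnorm : ∀ α β (m : ℕ) (v : Fin n → ℝ),
      (∑ p ∈ Finset.range (m + 1), (-1 : ℝ) ^ (m - p) *
        ∑ μ, ∑ ν, pd (θ α p) μ v * ηinv μ ν * pd (θ β (m - p)) ν v)
        = if m = 0 then η α β else 0)
    (Ω : Fin n → ℕ → Fin n → ℕ → (Fin n → ℝ) → ℝ)
    (hdef : ∀ α β (p q : ℕ) (v : Fin n → ℝ),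
      ((if p = 0 then 0 else Ω α (p - 1) β q v) + (if q = 0 then 0 else Ω α p β (q - 1) v))
        = (∑ μ, ∑ ν, pd (θ α p) μ v * ηinv μ ν * pd (θ β q) ν v)
          - (if p = 0 ∧ q = 0 then η α β else 0)) :
    ∀ α β (p q : ℕ) (v : Fin n → ℝ), Ω α p β q v = Ω β q α p v := by
  -- ηinv is symmetric
  have hinvsym : ∀ α β, ηinv α β = ηinv β α := by
    intro α β
    let M : Matrix (Fin n) (Fin n) ℝ := Matrix.of η
    let N : Matrix (Fin n) (Fin n) ℝ := Matrix.of ηinv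
    have hNM : N * M = 1 := by
      ext i j
      simpa [Matrix.mul_apply, Matrix.one_apply, M, N] using hηinv i j
    have hMN : M * N = 1 := mul_eq_one_comm.mp hNM
    have hMT : M.transpose = M := by
      ext i j; simp [Matrix.transpose_apply, M]; exact hηsym j i
    have hNT : N.transpose = N := by
      calc N.transpose = N.transpose * (M * N) := by rw [hMN, mul_one]
        _ = (N.transpose * M.transpose) * N := by rw [hMT, mul_assoc]
        _ = (M * N).transpose * N := by rw [Matrix.transpose_mul]
        _ = N := by rw [hMN, Matrix.transpose_one, one_mul]
    have := congrFun (congrFun hNT α) β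
    simpa [Matrix.transpose_apply, N] using this.symm
  -- symmetry of the quadratic form A
  have Asym : ∀ (α β : Fin n) (p q : ℕ) (v : Fin n → ℝ),
      (∑ μ, ∑ ν, pd (θ α p) μ v * ηinv μ ν * pd (θ β q) ν v)
        = ∑ μ, ∑ ν, pd (θ β q) μ v * ηinv μ ν * pd (θ α p) ν v := by
    intro α β p q v
    rw [Finset.sum_comm]
    refine Finset.sum_congr rfl fun ν _ => Finset.sum_congr rfl fun μ _ => ?_
    rw [hinvsym ν μ]; ring
  intro α β p q v
  induction p generalizing q with
  | zero =>
    have h1 := hdef α β 0 (q + 1) v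
    have h2 := hdef β α (q + 1) 0 v
    simp only [if_pos rfl, if_neg (Nat.succ_ne_zero q), Nat.add_sub_cancel] at h1 h2
    rw [Asym β α (q+1) 0 v] at h2
    simp at h1 h2
    linarith
  | succ p ih =>
    have h1 := hdef α β (p + 1) (q + 1) v
    have h2 := hdef β α (q + 1) (p + 1) v
    simp only [if_neg (Nat.succ_ne_zero _), Nat.add_sub_cancel] at h1 h2
    rw [Asym β α (q+1) (p+1) v] at h2
    have hih := ih (q + 1)
    simp at h1 h2
    linarith
end
end

section
/- The coefficients Ω_{α,p;β,q} of the generating function satisfy the derivative identity ∂_ξ Ω_{α,p;β,q} = (∂θ_{α,p}/∂v^σ)(∂θ_{β,q}/∂v^λ) c^{σλ}_ξ, where c^{σλ}_ξ = η^{σγ} c^λ_{γξ} (summation over repeated indices). -/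
noncomputable section

section Aux

lemma contDiff_pd' {n : ℕ} {f : (Fin n → ℝ) → ℝ} (hf : ContDiff ℝ (⊤ : ℕ∞) f) (i : Fin n) :
    ContDiff ℝ (⊤ : ℕ∞) (fun x => pd f i x) := by
  unfold pd
  exact (hf.fderiv_right (le_refl _)).clm_apply contDiff_const

lemma pd_mul' {n : ℕ} {f g : (Fin n → ℝ) → ℝ} {x : Fin n → ℝ} (i : Fin n)
    (hf : DifferentiableAt ℝ f x) (hg : DifferentiableAt ℝ g x) :
    pd (fun x => f x * g x) i x = pd f i x * g x + f x * pd g i x := by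
  unfold pd
  rw [fderiv_fun_mul hf hg]
  simp [ContinuousLinearMap.add_apply, ContinuousLinearMap.smul_apply]
  ring

lemma pd_sum' {n : ℕ} {ι : Type*} {s : Finset ι} {f : ι → (Fin n → ℝ) → ℝ} {x : Fin n → ℝ}
    (i : Fin n) (h : ∀ j ∈ s, DifferentiableAt ℝ (f j) x) :
    pd (fun x => ∑ j ∈ s, f j x) i x = ∑ j ∈ s, pd (f j) i x := by
  unfold pd
  rw [fderiv_fun_sum h]
  simp

lemma pd_mul_const' {n : ℕ} {f : (Fin n → ℝ) → ℝ} {x : Fin n → ℝ} (c : ℝ) (i : Fin n)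
    (hf : DifferentiableAt ℝ f x) :
    pd (fun x => f x * c) i x = pd f i x * c := by
  unfold pd
  rw [fderiv_mul_const hf]
  simp [mul_comm]

lemma pd_sub' {n : ℕ} {f g : (Fin n → ℝ) → ℝ} {x : Fin n → ℝ} (i : Fin n)
    (hf : DifferentiableAt ℝ f x) (hg : DifferentiableAt ℝ g x) :
    pd (fun x => f x - g x) i x = pd f i x - pd g i x := by
  unfold pd
  rw [fderiv_fun_sub hf hg]
  simp

lemma alg1 {n : ℕ} (c1 e d : Fin n → Fin n → ℝ) (f g : Fin n → ℝ)
    (key : ∀ γ ν, (∑ μ, c1 μ γ * e μ ν) = d γ ν) :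
    (∑ μ, ∑ ν, (∑ γ, c1 μ γ * f γ) * e μ ν * g ν)
      = ∑ σ, ∑ lam, f σ * g lam * d σ lam := by
  calc (∑ μ, ∑ ν, (∑ γ, c1 μ γ * f γ) * e μ ν * g ν)
      = ∑ μ, ∑ ν, ∑ γ, f γ * g ν * (c1 μ γ * e μ ν) := by
        refine Finset.sum_congr rfl fun μ _ => Finset.sum_congr rfl fun ν _ => ?_
        rw [Finset.sum_mul, Finset.sum_mul]
        exact Finset.sum_congr rfl fun γ _ => by ring
    _ = ∑ μ, ∑ γ, ∑ ν, f γ * g ν * (c1 μ γ * e μ ν) := by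
        exact Finset.sum_congr rfl fun μ _ => Finset.sum_comm
    _ = ∑ γ, ∑ μ, ∑ ν, f γ * g ν * (c1 μ γ * e μ ν) := Finset.sum_comm
    _ = ∑ γ, ∑ ν, ∑ μ, f γ * g ν * (c1 μ γ * e μ ν) := by
        exact Finset.sum_congr rfl fun γ _ => Finset.sum_comm
    _ = ∑ γ, ∑ ν, f γ * g ν * d γ ν := by
        refine Finset.sum_congr rfl fun γ _ => Finset.sum_congr rfl fun ν _ => ?_
        rw [← key γ ν, Finset.mul_sum]
  
lemma alg2 {n : ℕ} (c2 e d : Fin n → Fin n → ℝ) (f g : Fin n → ℝ)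
    (key : ∀ μ γ, (∑ ν, e μ ν * c2 ν γ) = d μ γ) :
    (∑ μ, ∑ ν, f μ * e μ ν * (∑ γ, c2 ν γ * g γ))
      = ∑ σ, ∑ lam, f σ * g lam * d σ lam := by
  calc (∑ μ, ∑ ν, f μ * e μ ν * (∑ γ, c2 ν γ * g γ))
      = ∑ μ, ∑ ν, ∑ γ, f μ * g γ * (e μ ν * c2 ν γ) := by
        refine Finset.sum_congr rfl fun μ _ => Finset.sum_congr rfl fun ν _ => ?_
        rw [Finset.mul_sum]
        exact Finset.sum_congr rfl fun γ _ => by ring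
    _ = ∑ μ, ∑ γ, ∑ ν, f μ * g γ * (e μ ν * c2 ν γ) := by
        exact Finset.sum_congr rfl fun μ _ => Finset.sum_comm
    _ = ∑ μ, ∑ γ, f μ * g γ * d μ γ := by
        refine Finset.sum_congr rfl fun μ _ => Finset.sum_congr rfl fun γ _ => ?_
        rw [← key μ γ, Finset.mul_sum]

end Aux

/-- the coefficients `Ω_{α,p;β,q}` of the generating function satisfy
`∂_ξ Ω_{α,p;β,q} = (∂θ_{α,p}/∂v^σ)(∂θ_{β,q}/∂v^λ) c^{σλ}_ξ`, where `c^{σλ}_ξ = η^{σγ} c^λ_{γξ}`.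
Here `cU γ ξ λ` stands for `c^λ_{γξ}`; the lowered structure constants
`c_{σλξ} = η_{σγ}c^γ_{λξ}` are totally symmetric, `θ` satisfies the calibration recursion
`∂_α∂_βθ_ν(z) = z c^γ_{αβ} ∂_γθ_ν(z)` and the normalization, and `Ω` is defined by the
generating relation, all expressed coefficientwise. -/
theorem Omega_derivative_identity (n : ℕ)
    (η ηinv : Fin n → Fin n → ℝ)
    (hηsym : ∀ α β, η α β = η β α)
    (hηinv : ∀ α β, (∑ ν, ηinv α ν * η ν β) = if α = β then (1 : ℝ) else 0)
    (cU : Fin n → Fin n → Fin n → (Fin n → ℝ) → ℝ)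
    (hclowsym : ∀ (σ lam ξ : Fin n) (v : Fin n → ℝ),
      (∑ γ, η σ γ * cU lam ξ γ v) = (∑ γ, η lam γ * cU σ ξ γ v) ∧
      (∑ γ, η σ γ * cU lam ξ γ v) = (∑ γ, η σ γ * cU ξ lam γ v))
    (θ : Fin n → ℕ → (Fin n → ℝ) → ℝ)
    (hθ : ∀ α p, ContDiff ℝ (⊤ : ℕ∞) (θ α p))
    (hrec : ∀ ν (p : ℕ) (α β : Fin n) (v : Fin n → ℝ),
      pd (fun x => pd (θ ν p) β x) α v
        = if p = 0 then 0 else ∑ γ, cU α β γ v * pd (θ ν (p - 1)) γ v)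
    (hnorm : ∀ α β (m : ℕ) (v : Fin n → ℝ),
      (∑ p ∈ Finset.range (m + 1), (-1 : ℝ) ^ (m - p) *
        ∑ μ, ∑ ν, pd (θ α p) μ v * ηinv μ ν * pd (θ β (m - p)) ν v)
        = if m = 0 then η α β else 0)
    (Ω : Fin n → ℕ → Fin n → ℕ → (Fin n → ℝ) → ℝ)
    (hdef : ∀ α β (p q : ℕ) (v : Fin n → ℝ),
      ((if p = 0 then 0 else Ω α (p - 1) β q v) + (if q = 0 then 0 else Ω α p β (q - 1) v))
        = (∑ μ, ∑ ν, pd (θ α p) μ v * ηinv μ ν * pd (θ β q) ν v)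
          - (if p = 0 ∧ q = 0 then η α β else 0)) :
    ∀ α (p : ℕ) β (q : ℕ) (ξ : Fin n) (v : Fin n → ℝ),
      pd (Ω α p β q) ξ v
        = ∑ σ, ∑ lam, pd (θ α p) σ v * pd (θ β q) lam v *
            (∑ γ, ηinv σ γ * cU γ ξ lam v) := by
  -- symmetry of ηinv
  have hηinvsym : ∀ a b, ηinv a b = ηinv b a := by
    have h1 : (Matrix.of ηinv) * (Matrix.of η) = 1 := by
      ext a b
      simp [Matrix.mul_apply, Matrix.one_apply, hηinv a b]
    have h2 : (Matrix.of η) * (Matrix.of ηinv) = 1 := mul_eq_one_comm.mp h1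
    have hT : (Matrix.of η).transpose = Matrix.of η := by
      ext a b; exact hηsym b a
    have h3 : (Matrix.of ηinv).transpose * (Matrix.of η) = 1 := by
      have := congrArg Matrix.transpose h2
      rw [Matrix.transpose_mul, hT, Matrix.transpose_one] at this
      exact this
    have h4 : (Matrix.of ηinv).transpose = Matrix.of ηinv := by
      calc (Matrix.of ηinv).transpose
          = (Matrix.of ηinv).transpose * ((Matrix.of η) * (Matrix.of ηinv)) := by
            rw [h2, mul_one]
        _ = ((Matrix.of ηinv).transpose * (Matrix.of η)) * (Matrix.of ηinv) := by
            rw [mul_assoc]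
        _ = Matrix.of ηinv := by rw [h3, one_mul]
    intro a b
    exact congrFun (congrFun h4 b) a
  -- raising-index formula for cU
  have cUex : ∀ (lam ξ a : Fin n) (v : Fin n → ℝ),
      cU lam ξ a v = ∑ σ, ηinv a σ * ∑ γ, η σ γ * cU lam ξ γ v := by
    intro lam ξ a v
    calc cU lam ξ a v
        = ∑ γ, (if a = γ then (1:ℝ) else 0) * cU lam ξ γ v := by
          simp [ite_mul, Finset.sum_ite_eq]
      _ = ∑ γ, (∑ σ, ηinv a σ * η σ γ) * cU lam ξ γ v := by
          exact Finset.sum_congr rfl fun γ _ => by rw [hηinv]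
      _ = ∑ γ, ∑ σ, ηinv a σ * (η σ γ * cU lam ξ γ v) := by
          refine Finset.sum_congr rfl fun γ _ => ?_
          rw [Finset.sum_mul]
          exact Finset.sum_congr rfl fun σ _ => by ring
      _ = ∑ σ, ηinv a σ * ∑ γ, η σ γ * cU lam ξ γ v := by
          rw [Finset.sum_comm]
          exact Finset.sum_congr rfl fun σ _ => by rw [Finset.mul_sum]
  -- symmetry of cU in its first two (lower) indices
  have hcUswap : ∀ (a b c : Fin n) (v : Fin n → ℝ), cU a b c v = cU b a c v := by
    intro a b c v
    rw [cUex a b c v, cUex b a c v]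
    exact Finset.sum_congr rfl fun σ _ => by rw [(hclowsym σ a b v).2]
  -- the key index-shuffling identity
  have hkey1 : ∀ (ξ γ ν : Fin n) (v : Fin n → ℝ),
      (∑ μ, cU ξ μ γ v * ηinv μ ν) = ∑ τ, ηinv γ τ * cU τ ξ ν v := by
    intro ξ γ ν v
    have l1 : (∑ μ, cU ξ μ γ v * ηinv μ ν) = ∑ μ, ηinv ν μ * cU μ ξ γ v := by
      refine Finset.sum_congr rfl fun μ _ => ?_
      rw [hcUswap ξ μ γ v, hηinvsym μ ν]; ring
    rw [l1]
    have expand : ∀ a b : Fin n,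
        (∑ τ, ηinv a τ * cU τ ξ b v)
          = ∑ τ, ∑ σ, ηinv a τ * (ηinv b σ * ∑ γ', η σ γ' * cU τ ξ γ' v) := by
      intro a b
      refine Finset.sum_congr rfl fun τ _ => ?_
      rw [cUex τ ξ b v, Finset.mul_sum]
    rw [expand ν γ, expand γ ν, Finset.sum_comm]
    refine Finset.sum_congr rfl fun σ _ => Finset.sum_congr rfl fun τ _ => ?_
    rw [(hclowsym σ τ ξ v).1]
    ring
  have hkey2 : ∀ (ξ μ γ : Fin n) (v : Fin n → ℝ),
      (∑ ν, ηinv μ ν * cU ξ ν γ v) = ∑ τ, ηinv μ τ * cU τ ξ γ v := by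
    intro ξ μ γ v
    exact Finset.sum_congr rfl fun ν _ => by rw [hcUswap ξ ν γ v]
  -- differentiability facts
  have hP : ∀ (a : Fin n) (r : ℕ) (s : Fin n), Differentiable ℝ (fun v => pd (θ a r) s v) :=
    fun a r s => (contDiff_pd' (hθ a r) s).differentiable (by simp)
  have hterm : ∀ (a : Fin n) (r : ℕ) (b : Fin n) (s : ℕ) (μ ν : Fin n),
      Differentiable ℝ (fun v => pd (θ a r) μ v * ηinv μ ν * pd (θ b s) ν v) :=
    fun a r b s μ ν => ((hP a r μ).mul_const _).mul (hP b s ν)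
  have hAdiff : ∀ (a : Fin n) (r : ℕ) (b : Fin n) (s : ℕ),
      Differentiable ℝ (fun v => ∑ μ, ∑ ν, pd (θ a r) μ v * ηinv μ ν * pd (θ b s) ν v) := by
    intro a r b s
    apply Differentiable.fun_sum
    intro μ _
    exact Differentiable.fun_sum fun ν _ => hterm a r b s μ ν
  -- derivative of the pairing sums
  have hpdA : ∀ (a : Fin n) (r : ℕ) (b : Fin n) (s : ℕ) (ξ : Fin n) (v : Fin n → ℝ),
      pd (fun v => ∑ μ, ∑ ν, pd (θ a r) μ v * ηinv μ ν * pd (θ b s) ν v) ξ v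
        = (if r = 0 then 0 else
            ∑ σ, ∑ lam, pd (θ a (r - 1)) σ v * pd (θ b s) lam v *
              (∑ γ, ηinv σ γ * cU γ ξ lam v))
          + (if s = 0 then 0 else
            ∑ σ, ∑ lam, pd (θ a r) σ v * pd (θ b (s - 1)) lam v *
              (∑ γ, ηinv σ γ * cU γ ξ lam v)) := by
    intro a r b s ξ v
    have step1 : pd (fun v => ∑ μ, ∑ ν, pd (θ a r) μ v * ηinv μ ν * pd (θ b s) ν v) ξ v
        = ∑ μ, ∑ ν,
            ((if r = 0 then 0 else ∑ γ, cU ξ μ γ v * pd (θ a (r - 1)) γ v) * ηinv μ ν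
                * pd (θ b s) ν v
              + pd (θ a r) μ v * ηinv μ ν
                * (if s = 0 then 0 else ∑ γ, cU ξ ν γ v * pd (θ b (s - 1)) γ v)) := by
      rw [pd_sum' ξ (fun μ _ =>
        (Differentiable.fun_sum fun ν _ => hterm a r b s μ ν).differentiableAt)]
      refine Finset.sum_congr rfl fun μ _ => ?_
      rw [pd_sum' ξ (fun ν _ => (hterm a r b s μ ν).differentiableAt)]
      refine Finset.sum_congr rfl fun ν _ => ?_
      rw [pd_mul' ξ (((hP a r μ).mul_const _).differentiableAt) ((hP b s ν).differentiableAt),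
        pd_mul_const' _ _ ((hP a r μ).differentiableAt), hrec a r ξ μ v, hrec b s ξ ν v]
    rw [step1, Finset.sum_congr rfl fun μ _ => Finset.sum_add_distrib, Finset.sum_add_distrib]
    congr 1
    · by_cases hr : r = 0
      · simp [hr]
      · simp only [hr, if_false]
        exact alg1 (fun μ γ => cU ξ μ γ v) ηinv
          (fun σ lam => ∑ γ, ηinv σ γ * cU γ ξ lam v)
          (fun γ => pd (θ a (r - 1)) γ v) (fun ν => pd (θ b s) ν v)
          (fun γ ν => hkey1 ξ γ ν v)
    · by_cases hs : s = 0
      · simp [hs]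
      · simp only [hs, if_false]
        exact alg2 (fun ν γ => cU ξ ν γ v) ηinv
          (fun σ lam => ∑ γ, ηinv σ γ * cU γ ξ lam v)
          (fun μ => pd (θ a r) μ v) (fun γ => pd (θ b (s - 1)) γ v)
          (fun μ γ => hkey2 ξ μ γ v)
  -- main induction
  suffices H : ∀ (α β : Fin n) (q p : ℕ),
      Differentiable ℝ (Ω α p β q) ∧
      ∀ (ξ : Fin n) (v : Fin n → ℝ),
        pd (Ω α p β q) ξ v
          = ∑ σ, ∑ lam, pd (θ α p) σ v * pd (θ β q) lam v *
              (∑ γ, ηinv σ γ * cU γ ξ lam v) by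
    intro α p β q ξ v
    exact (H α β q p).2 ξ v
  intro α β q
  induction q with
  | zero =>
    intro p
    have h0 : Ω α p β 0 = fun v => ∑ μ, ∑ ν,
        pd (θ α (p + 1)) μ v * ηinv μ ν * pd (θ β 0) ν v := by
      funext v
      have := hdef α β (p + 1) 0 v
      simpa using this
    constructor
    · rw [h0]; exact hAdiff α (p + 1) β 0
    · intro ξ v
      rw [h0, hpdA α (p + 1) β 0 ξ v]
      simp
  | succ q ih =>
    intro p
    have h1 : Ω α p β (q + 1) = fun v =>
        (∑ μ, ∑ ν, pd (θ α (p + 1)) μ v * ηinv μ ν * pd (θ β (q + 1)) ν v)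
          - Ω α (p + 1) β q v := by
      funext v
      have := hdef α β (p + 1) (q + 1) v
      simp only [Nat.succ_ne_zero, if_false, Nat.add_sub_cancel, and_false, false_and] at this
      linarith
    constructor
    · rw [h1]
      exact (hAdiff α (p + 1) β (q + 1)).sub (ih (p + 1)).1
    · intro ξ v
      rw [h1, pd_sub' ξ ((hAdiff α (p + 1) β (q + 1)).differentiableAt)
        ((ih (p + 1)).1.differentiableAt),
        hpdA α (p + 1) β (q + 1) ξ v, (ih (p + 1)).2 ξ v]
      simp
end
end

section
/- For a tau function defined from an Euler–Lagrange solution, the identity ∂ log τ/∂x = Σ_{α,p} (t^{α,p} − c^{α,p}) θ_{α,p}(v(t)) holds, where log τ(t) = (1/2) Σ t̃^{α,p} t̃^{β,q} Ω_{α,p;β,q}(v(t)) and v(t) satisfies Σ t̃^{α,p} ∂θ_{α,p}/∂v^γ (v(t)) = 0 for all γ. -/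
noncomputable section

/-- Partial derivative `∂f/∂t^i` with respect to one of the (possibly infinitely many)
time variables. -/
def pdT {ι : Type*} [DecidableEq ι] (f : (ι → ℝ) → ℝ) (i : ι) (t : ι → ℝ) : ℝ :=
  deriv (fun s => f (Function.update t i s)) (t i)

/-- for the tau function
`log τ(t) = ½ Σ t̃^{α,p} t̃^{β,q} Ω_{α,p;β,q}(v(t))` built from a solution `v(t)` of the
Euler–Lagrange equations `Σ t̃^{α,p} ∂_γ θ_{α,p}(v(t)) = 0`, the identity
`∂ log τ/∂x = Σ (t^{α,p} - c^{α,p}) θ_{α,p}(v(t))` holds (with `x = t^{1,0}`). -/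
theorem tau_x_derivative (n : ℕ) (hn : 0 < n)
    (η ηinv : Fin n → Fin n → ℝ)
    (hηsym : ∀ α β, η α β = η β α)
    (hηinv : ∀ α β, (∑ ν, ηinv α ν * η ν β) = if α = β then (1 : ℝ) else 0)
    (θ : Fin n → ℕ → (Fin n → ℝ) → ℝ)
    (hθ : ∀ α p, ContDiff ℝ (⊤ : ℕ∞) (θ α p))
    (cU : Fin n → Fin n → Fin n → (Fin n → ℝ) → ℝ)
    (hrec : ∀ ν (p : ℕ) (α β : Fin n) (v : Fin n → ℝ),
      pd (fun x => pd (θ ν p) β x) α v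
        = if p = 0 then 0 else ∑ γ, cU α β γ v * pd (θ ν (p - 1)) γ v)
    (Ω : Fin n → ℕ → Fin n → ℕ → (Fin n → ℝ) → ℝ)
    (hΩsmooth : ∀ α p β q, ContDiff ℝ (⊤ : ℕ∞) (Ω α p β q))
    (hΩsym : ∀ α (p : ℕ) β (q : ℕ) (v : Fin n → ℝ), Ω α p β q v = Ω β q α p v)
    (hΩθ : ∀ β (q : ℕ) (v : Fin n → ℝ), Ω (⟨0, hn⟩ : Fin n) 0 β q v = θ β q v)
    (hΩd : ∀ α (p : ℕ) β (q : ℕ) (ξ : Fin n) (v : Fin n → ℝ),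
      pd (Ω α p β q) ξ v
        = ∑ σ, ∑ lam, pd (θ α p) σ v * pd (θ β q) lam v *
            (∑ γ, ηinv σ γ * cU γ ξ lam v))
    (c : Fin n × ℕ → ℝ) (hc : Set.Finite {i | c i ≠ 0})
    (v : (Fin n × ℕ → ℝ) → Fin n → ℝ)
    (hvdiff : ∀ (t : Fin n × ℕ → ℝ) (γ : Fin n),
      DifferentiableAt ℝ
        (fun s => v (Function.update t ((⟨0, hn⟩ : Fin n), 0) s) γ)
        (t ((⟨0, hn⟩ : Fin n), 0)))
    (hEL : ∀ t : Fin n × ℕ → ℝ, Set.Finite {i | t i ≠ c i} → ∀ γ : Fin n,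
      (∑ᶠ i : Fin n × ℕ, (t i - c i) * pd (θ i.1 i.2) γ (v t)) = 0) :
    ∀ t : Fin n × ℕ → ℝ, Set.Finite {i | t i ≠ c i} →
      pdT (fun s =>
          (1 / 2) * ∑ᶠ i : Fin n × ℕ, ∑ᶠ j : Fin n × ℕ,
            (s i - c i) * (s j - c j) * Ω i.1 i.2 j.1 j.2 (v s))
        ((⟨0, hn⟩ : Fin n), 0) t
      = ∑ᶠ i : Fin n × ℕ, (t i - c i) * θ i.1 i.2 (v t) := by
  classical
  intro t ht
  set e : Fin n × ℕ := ((⟨0, hn⟩ : Fin n), 0) with he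
  set S : Finset (Fin n × ℕ) := insert e ht.toFinset with hSdef
  have heS : e ∈ S := Finset.mem_insert_self _ _
  have hout : ∀ s : ℝ, ∀ i, i ∉ S → Function.update t e s i - c i = 0 := by
    intro s i hi
    have hie : i ≠ e := fun h => hi (h ▸ heS)
    have hti : t i = c i := by
      by_contra h
      exact hi (Finset.mem_insert_of_mem (ht.mem_toFinset.2 h))
    rw [Function.update_of_ne hie, hti, sub_self]
  have hout0 : ∀ i, i ∉ S → t i - c i = 0 := by
    intro i hi
    have h := hout (t e) i hi
    rwa [Function.update_eq_self] at h
  have hfin1 : ∀ (t' : Fin n × ℕ → ℝ), (∀ i, i ∉ S → t' i - c i = 0) →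
      ∀ g : Fin n × ℕ → ℝ,
      (∑ᶠ i, (t' i - c i) * g i) = ∑ i ∈ S, (t' i - c i) * g i := by
    intro t' h g
    apply finsum_eq_finset_sum_of_support_subset
    intro i hi
    simp only [Function.mem_support] at hi
    by_contra hiS
    rw [Finset.mem_coe] at hiS
    exact hi (by rw [h i hiS, zero_mul])
  set w : ℝ → Fin n → ℝ := fun s => v (Function.update t e s) with hwdef
  set u : Fin n → ℝ := fun γ => deriv (fun s => v (Function.update t e s) γ) (t e) with hu
  have hwd : HasDerivAt w u (t e) :=
    hasDerivAt_pi.2 fun γ => (hvdiff t γ).hasDerivAt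
  have hupds : Function.update t e (t e) = t := Function.update_eq_self _ _
  have hw0 : w (t e) = v t := by rw [hwdef]; simp only [hupds]
  have hfin2 : ∀ s : ℝ,
      (∑ᶠ i : Fin n × ℕ, ∑ᶠ j : Fin n × ℕ,
        (Function.update t e s i - c i) * (Function.update t e s j - c j) *
          Ω i.1 i.2 j.1 j.2 (v (Function.update t e s)))
      = ∑ i ∈ S, ∑ j ∈ S,
          (Function.update t e s i - c i) * (Function.update t e s j - c j) *
            Ω i.1 i.2 j.1 j.2 (w s) := by
    intro s
    have houter : Function.support (fun i : Fin n × ℕ => ∑ᶠ j : Fin n × ℕ,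
        (Function.update t e s i - c i) * (Function.update t e s j - c j) *
          Ω i.1 i.2 j.1 j.2 (v (Function.update t e s))) ⊆ ↑S := by
      intro i hi
      simp only [Function.mem_support] at hi
      by_contra hiS
      rw [Finset.mem_coe] at hiS
      apply hi
      have hz : (fun j : Fin n × ℕ =>
          (Function.update t e s i - c i) * (Function.update t e s j - c j) *
            Ω i.1 i.2 j.1 j.2 (v (Function.update t e s))) = fun _ => (0:ℝ) := by
        funext j; rw [hout s i hiS]; ring
      rw [hz]; exact finsum_zero
    rw [finsum_eq_finset_sum_of_support_subset _ houter]
    refine Finset.sum_congr rfl fun i _ => ?_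
    apply finsum_eq_finset_sum_of_support_subset
    intro j hj
    simp only [Function.mem_support] at hj
    by_contra hjS
    rw [Finset.mem_coe] at hjS
    exact hj (by rw [hout s j hjS]; ring)
  have hΩcomp : ∀ i j : Fin n × ℕ,
      HasDerivAt (fun s => Ω i.1 i.2 j.1 j.2 (w s))
        (∑ ξ, u ξ * pd (Ω i.1 i.2 j.1 j.2) ξ (v t)) (t e) := by
    intro i j
    have hdΩ : HasFDerivAt (Ω i.1 i.2 j.1 j.2)
        (fderiv ℝ (Ω i.1 i.2 j.1 j.2) (w (t e))) (w (t e)) :=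
      (((hΩsmooth i.1 i.2 j.1 j.2).differentiable (by simp)) (w (t e))).hasFDerivAt
    have hcomp := hdΩ.comp_hasDerivAt (t e) hwd
    have hDu : fderiv ℝ (Ω i.1 i.2 j.1 j.2) (w (t e)) u
        = ∑ ξ, u ξ * pd (Ω i.1 i.2 j.1 j.2) ξ (v t) := by
      have hu' : u = ∑ ξ : Fin n, u ξ • (Pi.single ξ (1:ℝ) : Fin n → ℝ) := by
        funext γ
        simp [Finset.sum_apply, Pi.single_apply]
      conv_lhs => rw [hu']
      rw [map_sum]
      refine Finset.sum_congr rfl fun ξ _ => ?_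
      rw [map_smul, hw0, smul_eq_mul]
      rfl
    rw [hDu] at hcomp
    exact hcomp
  have ha : ∀ i : Fin n × ℕ, HasDerivAt (fun s => Function.update t e s i - c i)
      (if i = e then 1 else 0) (t e) := by
    intro i
    by_cases hie : i = e
    · have hfn : (fun s => Function.update t e s i - c i) = fun s => s - c i := by
        funext s; rw [hie, Function.update_self]
      rw [hfn, if_pos hie]
      simpa using (hasDerivAt_id (t e)).sub_const (c i)
    · have hfn : (fun s : ℝ => Function.update t e s i - c i) = fun _ => t i - c i := by
        funext s; rw [Function.update_of_ne hie]
      rw [hfn, if_neg hie]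
      exact hasDerivAt_const _ _
  have hterm : ∀ i j : Fin n × ℕ,
      HasDerivAt (fun s => (Function.update t e s i - c i) *
          (Function.update t e s j - c j) * Ω i.1 i.2 j.1 j.2 (w s))
        (((if i = e then (1:ℝ) else 0) * (t j - c j) + (t i - c i) * (if j = e then 1 else 0)) *
            Ω i.1 i.2 j.1 j.2 (v t)
          + (t i - c i) * (t j - c j) * (∑ ξ, u ξ * pd (Ω i.1 i.2 j.1 j.2) ξ (v t))) (t e) := by
    intro i j
    have h1 := ((ha i).fun_mul (ha j)).fun_mul (hΩcomp i j)
    simpa [hupds, hw0] using h1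
  have hF : HasDerivAt (fun s => (1/2 : ℝ) * ∑ i ∈ S, ∑ j ∈ S,
      (Function.update t e s i - c i) * (Function.update t e s j - c j) *
        Ω i.1 i.2 j.1 j.2 (w s))
      ((1/2 : ℝ) * ∑ i ∈ S, ∑ j ∈ S,
        (((if i = e then (1:ℝ) else 0) * (t j - c j) + (t i - c i) * (if j = e then 1 else 0)) *
            Ω i.1 i.2 j.1 j.2 (v t)
          + (t i - c i) * (t j - c j) * (∑ ξ, u ξ * pd (Ω i.1 i.2 j.1 j.2) ξ (v t)))) (t e) :=
    HasDerivAt.const_mul _ (HasDerivAt.fun_sum fun i _ => HasDerivAt.fun_sum fun j _ => hterm i j)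
  -- Euler-Lagrange as a finset sum
  have hELS : ∀ γ, ∑ i ∈ S, (t i - c i) * pd (θ i.1 i.2) γ (v t) = 0 := by
    intro γ
    rw [← hfin1 t hout0 (fun i => pd (θ i.1 i.2) γ (v t))]
    exact hEL t ht γ
  have key : ∀ ξ : Fin n, (∑ i ∈ S, ∑ j ∈ S,
      (t i - c i) * (t j - c j) * pd (Ω i.1 i.2 j.1 j.2) ξ (v t)) = 0 := by
    intro ξ
    have hsummand : ∀ i j : Fin n × ℕ,
        (t i - c i) * (t j - c j) * pd (Ω i.1 i.2 j.1 j.2) ξ (v t)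
        = ∑ σ, ((t i - c i) * pd (θ i.1 i.2) σ (v t)) *
            (∑ lam, (t j - c j) * pd (θ j.1 j.2) lam (v t) *
              (∑ γ, ηinv σ γ * cU γ ξ lam (v t))) := by
      intro i j
      rw [hΩd]
      simp only [Finset.mul_sum, Finset.sum_mul]
      exact Finset.sum_congr rfl fun σ _ => Finset.sum_congr rfl fun lam _ =>
        Finset.sum_congr rfl fun γ _ => by ring
    calc (∑ i ∈ S, ∑ j ∈ S, (t i - c i) * (t j - c j) * pd (Ω i.1 i.2 j.1 j.2) ξ (v t))
        = ∑ i ∈ S, ∑ σ : Fin n, ((t i - c i) * pd (θ i.1 i.2) σ (v t)) *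
            (∑ j ∈ S, ∑ lam, (t j - c j) * pd (θ j.1 j.2) lam (v t) *
              (∑ γ, ηinv σ γ * cU γ ξ lam (v t))) := by
          refine Finset.sum_congr rfl fun i _ => ?_
          rw [Finset.sum_congr rfl fun j (_ : j ∈ S) => hsummand i j, Finset.sum_comm]
          exact Finset.sum_congr rfl fun σ _ => (Finset.mul_sum _ _ _).symm
      _ = ∑ σ : Fin n, (∑ i ∈ S, (t i - c i) * pd (θ i.1 i.2) σ (v t)) *
            (∑ j ∈ S, ∑ lam, (t j - c j) * pd (θ j.1 j.2) lam (v t) *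
              (∑ γ, ηinv σ γ * cU γ ξ lam (v t))) := by
          rw [Finset.sum_comm]
          exact Finset.sum_congr rfl fun σ _ => (Finset.sum_mul _ _ _).symm
      _ = 0 := by
          refine Finset.sum_eq_zero fun σ _ => ?_
          rw [hELS σ, zero_mul]
  have hT3 : (∑ i ∈ S, ∑ j ∈ S, (t i - c i) * (t j - c j) *
      (∑ ξ, u ξ * pd (Ω i.1 i.2 j.1 j.2) ξ (v t))) = 0 := by
    calc (∑ i ∈ S, ∑ j ∈ S, (t i - c i) * (t j - c j) *
          (∑ ξ, u ξ * pd (Ω i.1 i.2 j.1 j.2) ξ (v t)))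
        = ∑ i ∈ S, ∑ ξ : Fin n, u ξ * (∑ j ∈ S,
            (t i - c i) * (t j - c j) * pd (Ω i.1 i.2 j.1 j.2) ξ (v t)) := by
          refine Finset.sum_congr rfl fun i _ => ?_
          have h1 : ∀ j ∈ S, (t i - c i) * (t j - c j) *
              (∑ ξ, u ξ * pd (Ω i.1 i.2 j.1 j.2) ξ (v t))
              = ∑ ξ, u ξ * ((t i - c i) * (t j - c j) * pd (Ω i.1 i.2 j.1 j.2) ξ (v t)) := by
            intro j _
            rw [Finset.mul_sum]
            exact Finset.sum_congr rfl fun ξ _ => by ring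
          rw [Finset.sum_congr rfl h1, Finset.sum_comm]
          exact Finset.sum_congr rfl fun ξ _ => (Finset.mul_sum _ _ _).symm
      _ = ∑ ξ : Fin n, u ξ * (∑ i ∈ S, ∑ j ∈ S,
            (t i - c i) * (t j - c j) * pd (Ω i.1 i.2 j.1 j.2) ξ (v t)) := by
          rw [Finset.sum_comm]
          refine Finset.sum_congr rfl fun ξ _ => ?_
          rw [← Finset.mul_sum]
      _ = 0 := by
          refine Finset.sum_eq_zero fun ξ _ => ?_
          rw [key ξ, mul_zero]
  have hT1 : (∑ i ∈ S, ∑ j ∈ S, (if i = e then (1:ℝ) else 0) *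
      ((t j - c j) * Ω i.1 i.2 j.1 j.2 (v t)))
      = ∑ i ∈ S, (t i - c i) * θ i.1 i.2 (v t) := by
    calc (∑ i ∈ S, ∑ j ∈ S, (if i = e then (1:ℝ) else 0) *
          ((t j - c j) * Ω i.1 i.2 j.1 j.2 (v t)))
        = ∑ i ∈ S, (if i = e then (∑ j ∈ S, (t j - c j) * Ω i.1 i.2 j.1 j.2 (v t)) else 0) := by
          refine Finset.sum_congr rfl fun i _ => ?_
          rw [← Finset.mul_sum]
          split <;> simp
      _ = ∑ j ∈ S, (t j - c j) * Ω e.1 e.2 j.1 j.2 (v t) := by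
          rw [Finset.sum_ite_eq' S e, if_pos heS]
      _ = ∑ i ∈ S, (t i - c i) * θ i.1 i.2 (v t) := by
          refine Finset.sum_congr rfl fun j _ => ?_
          rw [he]
          exact congrArg _ (hΩθ j.1 j.2 (v t))
  have hT2 : (∑ i ∈ S, ∑ j ∈ S, (if j = e then (1:ℝ) else 0) *
      ((t i - c i) * Ω i.1 i.2 j.1 j.2 (v t)))
      = ∑ i ∈ S, (t i - c i) * θ i.1 i.2 (v t) := by
    rw [Finset.sum_comm]
    calc (∑ j ∈ S, ∑ i ∈ S, (if j = e then (1:ℝ) else 0) *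
          ((t i - c i) * Ω i.1 i.2 j.1 j.2 (v t)))
        = ∑ j ∈ S, (if j = e then (∑ i ∈ S, (t i - c i) * Ω i.1 i.2 j.1 j.2 (v t)) else 0) := by
          refine Finset.sum_congr rfl fun j _ => ?_
          rw [← Finset.mul_sum]
          split <;> simp
      _ = ∑ i ∈ S, (t i - c i) * Ω i.1 i.2 e.1 e.2 (v t) := by
          rw [Finset.sum_ite_eq' S e, if_pos heS]
      _ = ∑ i ∈ S, (t i - c i) * θ i.1 i.2 (v t) := by
          refine Finset.sum_congr rfl fun i _ => ?_
          rw [hΩsym, he]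
          exact congrArg _ (hΩθ i.1 i.2 (v t))
  -- now compute the derivative
  simp only [pdT]
  have hfun : (fun s => (1/2 : ℝ) * ∑ᶠ i : Fin n × ℕ, ∑ᶠ j : Fin n × ℕ,
        (Function.update t e s i - c i) * (Function.update t e s j - c j) *
          Ω i.1 i.2 j.1 j.2 (v (Function.update t e s)))
      = (fun s => (1/2 : ℝ) * ∑ i ∈ S, ∑ j ∈ S,
        (Function.update t e s i - c i) * (Function.update t e s j - c j) *
          Ω i.1 i.2 j.1 j.2 (w s)) := by
    funext s
    rw [hfin2 s]
  rw [hfun, hF.deriv, hfin1 t hout0 (fun i => θ i.1 i.2 (v t))]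
  have hsplit : (∑ i ∈ S, ∑ j ∈ S,
      (((if i = e then (1:ℝ) else 0) * (t j - c j) + (t i - c i) * (if j = e then 1 else 0)) *
          Ω i.1 i.2 j.1 j.2 (v t)
        + (t i - c i) * (t j - c j) * (∑ ξ, u ξ * pd (Ω i.1 i.2 j.1 j.2) ξ (v t))))
      = (∑ i ∈ S, ∑ j ∈ S, (if i = e then (1:ℝ) else 0) *
          ((t j - c j) * Ω i.1 i.2 j.1 j.2 (v t)))
        + (∑ i ∈ S, ∑ j ∈ S, (if j = e then (1:ℝ) else 0) *
          ((t i - c i) * Ω i.1 i.2 j.1 j.2 (v t)))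
        + (∑ i ∈ S, ∑ j ∈ S, (t i - c i) * (t j - c j) *
          (∑ ξ, u ξ * pd (Ω i.1 i.2 j.1 j.2) ξ (v t))) := by
    rw [← Finset.sum_add_distrib, ← Finset.sum_add_distrib]
    refine Finset.sum_congr rfl fun i _ => ?_
    rw [← Finset.sum_add_distrib, ← Finset.sum_add_distrib]
    exact Finset.sum_congr rfl fun j _ => by ring
  rw [hsplit, hT1, hT2, hT3]
  ring
end
end

section
/- Genus expansion under the Legendre-type change of variable: if log τ̃ = Σ_{g≥0} ε^{2g−2} F̃_g(t̃) and log τ = ε^{−2}F₀(t) + ΔF(t) with ΔF = Σ_{g≥1}ε^{2g−2}F_g, and the variables are related by x̃ = ∂ₓ log τ = x̂ + ε²∂ₓΔF (so that F̃_g(t̃) = Σ_{k≥0}(1/k!)(ε²∂ₓΔF)^k ∂^k_{x̂}F̃_g(t̂)), then comparing ε-coefficients in log τ̃ = log τ − x ∂ₓ log τ yields F̃₁(t̂) = F₁(t) and F̃₂(t̂) = F₂(t) − (1/(2v^n))(∂F₁/∂x)², where ∂²F̃₀/∂x̂² = −1/v^n. -/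
/-!
Expanding `F̃_g(x̂ + P) = Σ_k P^k/k! ∂^k F̃_g(x̂)` with `P = ε² ∂ₓΔF`, a series without constant
term, only finitely many terms reach a given power of `ε²`: `P^k` starts at order `k`, with leading
coefficient `(∂ₓF₁)^k`. The coefficients of `ε⁰` and `ε²` therefore involve only `F̃₁, F̃₂` and the
first two derivatives of `F̃₀, F̃₁`, and the known values of those derivatives turn the two
coefficient identities into the formulas for `F̃₁` and `F̃₂`.
-/

namespace PowerSeries

variable {R : Type*} [CommSemiring R] {P : R⟦X⟧}

theorem coeff_pow_eq_zero_of_lt (hP : constantCoeff P = 0) {j k : ℕ} (h : j < k) :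
    coeff j (P ^ k) = 0 :=
  coeff_of_lt_order j ((Nat.cast_lt.2 h).trans_le (le_order_pow_of_constantCoeff_eq_zero k hP))

theorem coeff_pow_self_eq_coeff_one_pow (hP : constantCoeff P = 0) (k : ℕ) :
    coeff k (P ^ k) = coeff 1 P ^ k := by
  obtain ⟨Q, rfl⟩ := X_dvd_iff.2 hP
  rw [mul_pow, coeff_X_pow_mul', if_pos le_rfl, Nat.sub_self, coeff_zero_eq_constantCoeff,
    map_pow, coeff_succ_X_mul, coeff_zero_eq_constantCoeff]

end PowerSeries

open PowerSeries

section TaylorGenusCoeff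

variable {K : Type*} [Field K]

/-- The coefficient of `X^m` in `Σ_g X^g Σ_k (P^k / k!) b g k`, where `b g k` plays the role of
`∂^k F̃_g`; for `P(0) = 0` the terms with `k > m` vanish, so the sum over `k` is cut off there. -/
noncomputable def taylorGenusCoeff (P : K⟦X⟧) (b : ℕ → ℕ → K) (m : ℕ) : K :=
  ∑ g ∈ Finset.range (m + 1), ∑ k ∈ Finset.range (m + 1),
    (1 / (Nat.factorial k : K)) * coeff (m - g) (P ^ k) * b g k

variable {P : K⟦X⟧} (b : ℕ → ℕ → K)

theorem taylorGenusCoeff_one (hP : constantCoeff P = 0) :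
    taylorGenusCoeff P b 1 = coeff 1 P * b 0 1 + b 1 0 := by
  simp [taylorGenusCoeff, Finset.sum_range_succ, coeff_one, hP]

theorem taylorGenusCoeff_two (hP : constantCoeff P = 0) :
    taylorGenusCoeff P b 2 =
      coeff 2 P * b 0 1 + coeff 1 P ^ 2 / 2 * b 0 2 + coeff 1 P * b 1 1 + b 2 0 := by
  simp [taylorGenusCoeff, Finset.sum_range_succ, coeff_one, hP, coeff_pow_eq_zero_of_lt hP,
    coeff_pow_self_eq_coeff_one_pow hP, div_eq_inv_mul]

end TaylorGenusCoeff

theorem genus_expansion_legendre_general (f f' : ℕ → ℝ) (b : ℕ → ℕ → ℝ) (x vn : ℝ)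
    (P : PowerSeries ℝ)
    (hP : P = PowerSeries.mk fun i => if i = 0 then 0 else f' i)
    (hser : ∀ m : ℕ,
      (∑ g ∈ Finset.range (m + 1), ∑ k ∈ Finset.range (m + 1),
        (1 / (Nat.factorial k : ℝ)) * (PowerSeries.coeff (m - g) (P ^ k)) * b g k)
        = f m - x * f' m)
    (hb01 : b 0 1 = -x)
    (hb02 : b 0 2 = -1 / vn)
    (hb11 : b 1 1 = f' 1 * (1 / vn)) :
    b 1 0 = f 1 ∧ b 2 0 = f 2 - (1 / (2 * vn)) * (f' 1) ^ 2 := by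
  have hP0 : constantCoeff P = 0 := by simp [hP]
  have hP1 : coeff 1 P = f' 1 := by simp [hP]
  have hP2 : coeff 2 P = f' 2 := by simp [hP]
  have genus_one := (taylorGenusCoeff_one b hP0).symm.trans (hser 1)
  have genus_two := (taylorGenusCoeff_two b hP0).symm.trans (hser 2)
  rw [hP1] at genus_one
  rw [hP1, hP2, hb01, hb02, hb11] at genus_two
  constructor
  · linear_combination genus_one - f' 1 * hb01
  · linear_combination genus_two

/-- genus expansion under the Legendre-type change of variable.
Working in the variable `X = ε²`: with `P = ε² ∂ₓΔF = Σ_{g≥1} X^g f'_g` (where `f_g = F_g(t)`,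
`f'_g = ∂ₓF_g(t)`, and `b g k = ∂^k_x̂ F̃_g(t̂)`), the relation
`log τ̃ = log τ - x ∂ₓ log τ` together with the Taylor expansion
`F̃_g(t̃) = Σ_k (1/k!) (ε²∂ₓΔF)^k ∂^k_x̂ F̃_g(t̂)` reads, coefficientwise in `X`,
`Σ_{g+j=m} Σ_k (1/k!) (coeff_j P^k) b g k = f_m - x f'_m`.  Given `∂F̃₀/∂x̂ = -x`,
`∂²F̃₀/∂x̂² = -1/vⁿ`, and the chain rule `∂F̃₁/∂x̂ = (1/vⁿ) ∂F₁/∂x`, comparing coefficients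
yields `F̃₁(t̂) = F₁(t)` and `F̃₂(t̂) = F₂(t) - (1/(2vⁿ)) (∂F₁/∂x)²`. -/
theorem genus_expansion_legendre (f f' : ℕ → ℝ) (b : ℕ → ℕ → ℝ) (x vn : ℝ)
    (hvn : vn ≠ 0)
    (P : PowerSeries ℝ)
    (hP : P = PowerSeries.mk fun i => if i = 0 then 0 else f' i)
    (hser : ∀ m : ℕ,
      (∑ g ∈ Finset.range (m + 1), ∑ k ∈ Finset.range (m + 1),
        (1 / (Nat.factorial k : ℝ)) * (PowerSeries.coeff (m - g) (P ^ k)) * b g k)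
        = f m - x * f' m)
    (hb01 : b 0 1 = -x)
    (hb02 : b 0 2 = -1 / vn)
    (hb11 : b 1 1 = f' 1 * (1 / vn)) :
    b 1 0 = f 1 ∧ b 2 0 = f 2 - (1 / (2 * vn)) * (f' 1) ^ 2 :=
  genus_expansion_legendre_general f f' b x vn P hP hser hb01 hb02 hb11
end
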